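/- For every γ > 0 and all x, y ∈ ℝ, writing a = √γ/2 + (y−x)/√γ, the partial derivative of B_γ in x simplifies to ∂B_γ/∂x (x,y) = e^{−x}Φ(a), and the mixed second partial derivative simplifies to ∂²B_γ/∂x∂y (x,y) = e^{−x}φ(a)/√γ. -/

import Mathlib

/-!
Differentiating `B_γ` in `x` by the product and chain rules gives `e^{-x} Φ(a)` plus
`(e^{-x} φ(a) - e^{-y} φ(b)) / √γ` with `b = √γ/2 + (x-y)/√γ`, and the bracket vanishes by the
symmetry identity. The resulting formula holds for every `y`, so the mixed derivative is the
`y`-derivative of `e^{-x} Φ(a)`, which is `e^{-x} φ(a) / √γ` by the fundamental theorem of calculus.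
-/

open MeasureTheory

/-- Standard normal density. -/
noncomputable def stdNormalPdf (u : ℝ) : ℝ :=
  (Real.sqrt (2 * Real.pi))⁻¹ * Real.exp (-u ^ 2 / 2)

/-- Standard normal distribution function. -/
noncomputable def stdNormalCdf (u : ℝ) : ℝ := ∫ v in Set.Iic u, stdNormalPdf v

/-- Brown–Resnick bivariate log-distribution with Gumbel margins. -/
noncomputable def brB (γ x y : ℝ) : ℝ :=
  -Real.exp (-x) * stdNormalCdf (Real.sqrt γ / 2 + (y - x) / Real.sqrt γ)
    - Real.exp (-y) * stdNormalCdf (Real.sqrt γ / 2 + (x - y) / Real.sqrt γ)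

open Real ProbabilityTheory

theorem hasDerivAt_integral_Iic {E : Type*} [NormedAddCommGroup E] [NormedSpace ℝ E]
    [CompleteSpace E] {f : ℝ → E} {u : ℝ} (hfi : Integrable f) (hf : ContinuousAt f u) :
    HasDerivAt (fun t => ∫ v in Set.Iic t, f v) (f u) u := by
  have hsplit : (fun t => ∫ v in Set.Iic t, f v)
      = fun t => (∫ v in Set.Iic 0, f v) + ∫ v in (0 : ℝ)..t, f v := by
    funext t
    rw [← intervalIntegral.integral_Iic_sub_Iic hfi.integrableOn hfi.integrableOn]
    abel
  rw [hsplit]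
  exact (intervalIntegral.integral_hasDerivAt_right hfi.intervalIntegrable
    hfi.aestronglyMeasurable.stronglyMeasurableAtFilter hf).const_add _

theorem stdNormalPdf_eq_gaussianPDFReal : stdNormalPdf = gaussianPDFReal 0 1 := by
  funext u
  simp [stdNormalPdf, gaussianPDFReal]

theorem continuous_stdNormalPdf : Continuous stdNormalPdf := by
  unfold stdNormalPdf
  fun_prop

theorem hasDerivAt_stdNormalCdf (u : ℝ) : HasDerivAt stdNormalCdf (stdNormalPdf u) u :=
  hasDerivAt_integral_Iic (stdNormalPdf_eq_gaussianPDFReal ▸ integrable_gaussianPDFReal 0 1)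
    continuous_stdNormalPdf.continuousAt

theorem exp_neg_mul_stdNormalPdf_comm {c : ℝ} (hc : c ≠ 0) (x y : ℝ) :
    exp (-x) * stdNormalPdf (c / 2 + (y - x) / c)
      = exp (-y) * stdNormalPdf (c / 2 + (x - y) / c) := by
  simp only [stdNormalPdf, mul_left_comm (exp _), ← exp_add]
  congr 2
  field_simp
  ring

theorem hasDerivAt_brB_fst {γ : ℝ} (hγ : 0 < γ) (x y : ℝ) :
    HasDerivAt (fun x' => brB γ x' y)
      (exp (-x) * stdNormalCdf (√γ / 2 + (y - x) / √γ)) x := by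
  set c := √γ
  have hc : c ≠ 0 := (sqrt_pos.mpr hγ).ne'
  have ha : HasDerivAt (fun x' => c / 2 + (y - x') / c) (-1 / c) x := by
    simpa using (((hasDerivAt_id x).const_sub y).div_const c).const_add (c / 2)
  have hb : HasDerivAt (fun x' => c / 2 + (x' - y) / c) (1 / c) x := by
    simpa using (((hasDerivAt_id x).sub_const y).div_const c).const_add (c / 2)
  have hB := ((hasDerivAt_neg x).exp.neg.mul ((hasDerivAt_stdNormalCdf _).comp x ha)).sub
    (((hasDerivAt_stdNormalCdf _).comp x hb).const_mul (exp (-y)))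
  refine hB.congr_deriv ?_
  simp only [Function.comp_apply, Pi.neg_apply]
  linear_combination (1 / c) * exp_neg_mul_stdNormalPdf_comm hc x y

/-- Simplified partial derivatives of `B_γ`: `∂B_γ/∂x = e^{-x} Φ(a)` and
`∂²B_γ/∂x∂y = e^{-x} φ(a)/√γ`, where `a = √γ/2 + (y-x)/√γ`. -/
theorem stmt_11 (γ : ℝ) (hγ : 0 < γ) (x y : ℝ) :
    HasDerivAt (fun x' => brB γ x' y)
      (Real.exp (-x) * stdNormalCdf (Real.sqrt γ / 2 + (y - x) / Real.sqrt γ)) x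
    ∧ HasDerivAt (fun y' => deriv (fun x' => brB γ x' y') x)
        (Real.exp (-x) * stdNormalPdf (Real.sqrt γ / 2 + (y - x) / Real.sqrt γ)
          / Real.sqrt γ) y := by
  refine ⟨hasDerivAt_brB_fst hγ x y, ?_⟩
  have hpartial : (fun y' => deriv (fun x' => brB γ x' y') x)
      = fun y' => exp (-x) * stdNormalCdf (√γ / 2 + (y' - x) / √γ) :=
    funext fun y' => (hasDerivAt_brB_fst hγ x y').deriv
  have ha : HasDerivAt (fun y' => √γ / 2 + (y' - x) / √γ) (1 / √γ) y := by
    simpa using (((hasDerivAt_id y).sub_const x).div_const √γ).const_add (√γ / 2)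
  rw [hpartial]
  exact (((hasDerivAt_stdNormalCdf _).comp y ha).const_mul (exp (-x))).congr_deriv (by ring)
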